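/- arXiv:2508.04067 — 2 statements merged into one kernel-verified Lean document; each statement's English description precedes it below -/
import Mathlib

section
/- Let g : [0,∞) → ℝ be positive and satisfy (1+s)g'(s) ≥ g(s). Let ρ > 0, set Φ(ρ) = cosh ρ − 1, φ(ρ) = sinh ρ, φ'(ρ) = cosh ρ. Then for all integers n ≥ 1 and 0 ≤ k ≤ n, the quantity [ ((n−k)(k+1))/(2n) · φ(ρ)^{n−k−2} φ'(ρ)^k + (k(k−1))/(2n) · φ(ρ)^{n−k} φ'(ρ)^{k−2} ] · g(Φ(ρ)) + (k/n) · φ(ρ)^{n−k} φ'(ρ)^{k−1} · g'(Φ(ρ)) is bounded below by [ ((n−k)(k+1))/(2n) · φ(ρ)^{n−k−2} φ'(ρ)^k + ((k+1)k)/(2n) · φ(ρ)^{n−k} φ'(ρ)^{k−2} ] · g(Φ(ρ)), which is strictly positive. -/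
/-! The `g'` term absorbs the gap between the two `φ^{n-k} φ'^{k-2}` coefficients: their difference
is `-(k/n)`, and `φ'·g'(Φ) ≥ g(Φ)` is the hypothesis on `g` at `s = Φ(ρ)`, because `1 + Φ = φ'`. -/

theorem add_mul_le_add_mul_add_of_le_mul {n k S C c G G' P : ℝ} (hn : 0 ≤ n) (hk : 0 ≤ k)
    (hS : 0 ≤ S) (hC : 0 ≤ C) (hG : G ≤ c * G') :
    (P + (k + 1) * k / (2 * n) * S * C) * G
      ≤ (P + k * (k - 1) / (2 * n) * S * C) * G + k / n * S * (C * c) * G' := by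
  have hgain : 0 ≤ k / n * S * C * (c * G' - G) := by
    have := sub_nonneg.2 hG
    positivity
  calc (P + (k + 1) * k / (2 * n) * S * C) * G
      = (P + k * (k - 1) / (2 * n) * S * C) * G + k / n * S * C * G := by ring
    _ ≤ (P + k * (k - 1) / (2 * n) * S * C) * G + k / n * S * C * G
          + k / n * S * C * (c * G' - G) := le_add_of_nonneg_right hgain
    _ = (P + k * (k - 1) / (2 * n) * S * C) * G + k / n * S * (C * c) * G' := by ring

theorem sub_mul_succ_div_add_succ_mul_div_pos {n k u v : ℝ} (hn : 0 < n) (hk : 0 ≤ k) (hkn : k ≤ n) (hu : 0 < u)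
    (hv : 0 < v) : 0 < (n - k) * (k + 1) / (2 * n) * u + (k + 1) * k / (2 * n) * v := by
  rcases hkn.lt_or_eq with hlt | rfl
  · have : 0 < n - k := sub_pos.2 hlt
    have : 0 ≤ (k + 1) * k / (2 * n) * v := by positivity
    have : 0 < (n - k) * (k + 1) / (2 * n) * u := by positivity
    linarith
  · rw [sub_self, zero_mul, zero_div, zero_mul, zero_add]
    positivity

/-- Positivity of the `|∇u|²` coefficient in the proof of the weighted volume
inequality in `ℍ^{n+1}`: with `φ = sinh ρ`, `φ' = cosh ρ`, `Φ = cosh ρ - 1`,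
and `g` positive with `(1+s)g'(s) ≥ g(s)`, the coefficient is bounded below by
a strictly positive quantity. -/
theorem stmt6 (g : ℝ → ℝ) (hpos : ∀ s : ℝ, 0 ≤ s → 0 < g s)
    (hineq : ∀ s : ℝ, 0 ≤ s → g s ≤ (1 + s) * deriv g s)
    (ρ : ℝ) (hρ : 0 < ρ) (n k : ℕ) (hn : 1 ≤ n) (hk : k ≤ n) :
    ((((n : ℝ) - k) * (k + 1)) / (2 * n) * Real.sinh ρ ^ ((n : ℤ) - k - 2) * Real.cosh ρ ^ (k : ℤ)
        + ((k : ℝ) * (k - 1)) / (2 * n) * Real.sinh ρ ^ ((n : ℤ) - k) * Real.cosh ρ ^ ((k : ℤ) - 2))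
        * g (Real.cosh ρ - 1)
      + (k : ℝ) / n * Real.sinh ρ ^ ((n : ℤ) - k) * Real.cosh ρ ^ ((k : ℤ) - 1)
        * deriv g (Real.cosh ρ - 1)
    ≥ ((((n : ℝ) - k) * (k + 1)) / (2 * n) * Real.sinh ρ ^ ((n : ℤ) - k - 2) * Real.cosh ρ ^ (k : ℤ)
        + (((k : ℝ) + 1) * k) / (2 * n) * Real.sinh ρ ^ ((n : ℤ) - k) * Real.cosh ρ ^ ((k : ℤ) - 2))
        * g (Real.cosh ρ - 1)
    ∧ 0 < ((((n : ℝ) - k) * (k + 1)) / (2 * n) * Real.sinh ρ ^ ((n : ℤ) - k - 2)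
          * Real.cosh ρ ^ (k : ℤ)
        + (((k : ℝ) + 1) * k) / (2 * n) * Real.sinh ρ ^ ((n : ℤ) - k) * Real.cosh ρ ^ ((k : ℤ) - 2))
        * g (Real.cosh ρ - 1) := by
  have hs : 0 < Real.sinh ρ := Real.sinh_pos_iff.2 hρ
  have hc : 0 < Real.cosh ρ := Real.cosh_pos ρ
  have hΦ : 0 ≤ Real.cosh ρ - 1 := sub_nonneg.2 (Real.one_le_cosh ρ)
  have hg' := hineq _ hΦ
  rw [add_sub_cancel] at hg'
  have hn' : (0 : ℝ) < n := by exact_mod_cast hn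
  have hkn : (k : ℝ) ≤ n := by exact_mod_cast hk
  rw [show (k : ℤ) - 1 = (k : ℤ) - 2 + 1 by ring, zpow_add_one₀ hc.ne']
  refine ⟨add_mul_le_add_mul_add_of_le_mul hn'.le k.cast_nonneg (zpow_pos hs _).le
    (zpow_pos hc _).le hg', mul_pos ?_ (hpos _ hΦ)⟩
  simpa only [mul_assoc] using sub_mul_succ_div_add_succ_mul_div_pos hn' k.cast_nonneg hkn
    (mul_pos (zpow_pos hs ((n : ℤ) - k - 2)) (zpow_pos hc k))
    (mul_pos (zpow_pos hs ((n : ℤ) - k)) (zpow_pos hc ((k : ℤ) - 2)))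
end

section
/- Let g : [0,∞) → ℝ be positive and satisfy (1+s)g'(s) ≥ g(s). Let ρ > 0, φ(ρ) = sinh ρ, φ'(ρ) = cosh ρ = 1 + Φ(ρ) with Φ(ρ) = cosh ρ − 1. Then for integers n ≥ 1, 0 ≤ k ≤ n−1, −1 ≤ j < k, the quantity [ ((n−k)(k−j))/(2n) · φ^{n−k−2} φ'^{k} + (k(k−j−2))/(2n) · φ^{n−k} φ'^{k−2} ] · g(Φ(ρ)) + ((2k−j−1)/(2n)) · φ^{n−k} φ'^{k−1} · g'(Φ(ρ)) is at least [ ((n−k)(k−j))/(2n) · φ^{n−k−2} φ'^{k} + ((k+1)(k−j−1))/(2n) · φ^{n−k} φ'^{k−2} ] · g(Φ(ρ)) > 0, where φ = φ(ρ), φ' = φ'(ρ). -/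
/-!
Since `k (k - j - 2) + (2k - j - 1) = (k + 1)(k - j - 1)`, the left-hand side equals the
right-hand side plus `(2k - j - 1)/(2n) · φ^{n-k} φ'^{k-2} · (φ' g'(Φ) - g(Φ))`, and
`φ' = 1 + Φ` turns the hypothesis on `g` into `φ' g'(Φ) ≥ g(Φ)`.
Positivity holds because `n > k > j`, so the first coefficient is positive and the
second non-negative.
-/

open Real

section QuermassCoefficients

variable {x y G D n k j : ℝ} {p q : ℤ}

lemma quermass_lhs_eq_rhs_add (hy : y ≠ 0) :
    ((n - k) * (k - j) / (2 * n) * x ^ (p - 2) * y ^ q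
        + k * (k - j - 2) / (2 * n) * x ^ p * y ^ (q - 2)) * G
      + (2 * k - j - 1) / (2 * n) * x ^ p * y ^ (q - 1) * D
    = ((n - k) * (k - j) / (2 * n) * x ^ (p - 2) * y ^ q
        + (k + 1) * (k - j - 1) / (2 * n) * x ^ p * y ^ (q - 2)) * G
      + (2 * k - j - 1) / (2 * n) * x ^ p * y ^ (q - 2) * (y * D - G) := by
  rw [show q - 1 = q - 2 + 1 by ring, zpow_add_one₀ hy]
  ring

lemma quermass_rhs_le_lhs (hx : 0 < x) (hy : 0 < y) (hn : 0 ≤ n) (hk : 0 ≤ k)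
    (hjk : j + 1 ≤ k) (hGD : G ≤ y * D) :
    ((n - k) * (k - j) / (2 * n) * x ^ (p - 2) * y ^ q
        + (k + 1) * (k - j - 1) / (2 * n) * x ^ p * y ^ (q - 2)) * G
      ≤ ((n - k) * (k - j) / (2 * n) * x ^ (p - 2) * y ^ q
        + k * (k - j - 2) / (2 * n) * x ^ p * y ^ (q - 2)) * G
      + (2 * k - j - 1) / (2 * n) * x ^ p * y ^ (q - 1) * D := by
  have hcoeff : 0 ≤ (2 * k - j - 1) / (2 * n) := div_nonneg (by linarith) (by linarith)
  have hremainder : 0 ≤ (2 * k - j - 1) / (2 * n) * x ^ p * y ^ (q - 2) * (y * D - G) :=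
    mul_nonneg (by positivity) (sub_nonneg.mpr hGD)
  rw [quermass_lhs_eq_rhs_add hy.ne']
  exact le_add_of_nonneg_right hremainder

lemma quermass_rhs_coeff_pos (hx : 0 < x) (hy : 0 < y) (hk : 0 ≤ k) (hkn : k < n)
    (hjk : j + 1 ≤ k) :
    0 < (n - k) * (k - j) / (2 * n) * x ^ (p - 2) * y ^ q
        + (k + 1) * (k - j - 1) / (2 * n) * x ^ p * y ^ (q - 2) := by
  have hn : 0 < n := hk.trans_lt hkn
  have hfirst : 0 < (n - k) * (k - j) / (2 * n) :=
    div_pos (mul_pos (by linarith) (by linarith)) (by linarith)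
  have hsecond : 0 ≤ (k + 1) * (k - j - 1) / (2 * n) :=
    div_nonneg (mul_nonneg (by linarith) (by linarith)) (by linarith)
  exact add_pos_of_pos_of_nonneg (by positivity) (by positivity)

end QuermassCoefficients

theorem stmt7_general (g : ℝ → ℝ) (hpos : ∀ s : ℝ, 0 ≤ s → 0 < g s)
    (hineq : ∀ s : ℝ, 0 ≤ s → g s ≤ (1 + s) * deriv g s)
    (ρ : ℝ) (hρ : 0 < ρ) (n k : ℕ) (j : ℤ) (hn : 1 ≤ n) (hk : k ≤ n - 1)
    (hjk : j < (k : ℤ)) :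
    ((((n : ℝ) - k) * ((k : ℝ) - j)) / (2 * n) * Real.sinh ρ ^ ((n : ℤ) - k - 2)
          * Real.cosh ρ ^ (k : ℤ)
        + ((k : ℝ) * ((k : ℝ) - j - 2)) / (2 * n) * Real.sinh ρ ^ ((n : ℤ) - k)
          * Real.cosh ρ ^ ((k : ℤ) - 2)) * g (Real.cosh ρ - 1)
      + (2 * (k : ℝ) - j - 1) / (2 * n) * Real.sinh ρ ^ ((n : ℤ) - k)
          * Real.cosh ρ ^ ((k : ℤ) - 1) * deriv g (Real.cosh ρ - 1)
    ≥ ((((n : ℝ) - k) * ((k : ℝ) - j)) / (2 * n) * Real.sinh ρ ^ ((n : ℤ) - k - 2)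
          * Real.cosh ρ ^ (k : ℤ)
        + (((k : ℝ) + 1) * ((k : ℝ) - j - 1)) / (2 * n) * Real.sinh ρ ^ ((n : ℤ) - k)
          * Real.cosh ρ ^ ((k : ℤ) - 2)) * g (Real.cosh ρ - 1)
    ∧ 0 < ((((n : ℝ) - k) * ((k : ℝ) - j)) / (2 * n) * Real.sinh ρ ^ ((n : ℤ) - k - 2)
          * Real.cosh ρ ^ (k : ℤ)
        + (((k : ℝ) + 1) * ((k : ℝ) - j - 1)) / (2 * n) * Real.sinh ρ ^ ((n : ℤ) - k)
          * Real.cosh ρ ^ ((k : ℤ) - 2)) * g (Real.cosh ρ - 1) := by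
  have hsinh : 0 < sinh ρ := sinh_pos_iff.mpr hρ
  have hΦ : 0 ≤ cosh ρ - 1 := sub_nonneg.mpr (one_le_cosh ρ)
  have hkn : (k : ℝ) < n := by exact_mod_cast (by omega : k < n)
  have hjk' : (j : ℝ) + 1 ≤ k := by exact_mod_cast (by omega : j + 1 ≤ k)
  have hGD : g (cosh ρ - 1) ≤ cosh ρ * deriv g (cosh ρ - 1) := by
    simpa using hineq _ hΦ
  exact ⟨quermass_rhs_le_lhs hsinh (cosh_pos ρ) n.cast_nonneg k.cast_nonneg hjk' hGD,
    mul_pos (quermass_rhs_coeff_pos hsinh (cosh_pos ρ) k.cast_nonneg hkn hjk') (hpos _ hΦ)⟩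

/-- Coefficient positivity used in the quermassintegral stability estimate in
`ℍ^{n+1}`: with `φ = sinh ρ`, `φ' = cosh ρ`, `Φ = cosh ρ - 1`, `g` positive with
`(1+s)g'(s) ≥ g(s)`, integers `n ≥ 1`, `0 ≤ k ≤ n-1`, `-1 ≤ j < k`. -/
theorem stmt7 (g : ℝ → ℝ) (hpos : ∀ s : ℝ, 0 ≤ s → 0 < g s)
    (hineq : ∀ s : ℝ, 0 ≤ s → g s ≤ (1 + s) * deriv g s)
    (ρ : ℝ) (hρ : 0 < ρ) (n k : ℕ) (j : ℤ) (hn : 1 ≤ n) (hk : k ≤ n - 1)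
    (hj : -1 ≤ j) (hjk : j < (k : ℤ)) :
    ((((n : ℝ) - k) * ((k : ℝ) - j)) / (2 * n) * Real.sinh ρ ^ ((n : ℤ) - k - 2)
          * Real.cosh ρ ^ (k : ℤ)
        + ((k : ℝ) * ((k : ℝ) - j - 2)) / (2 * n) * Real.sinh ρ ^ ((n : ℤ) - k)
          * Real.cosh ρ ^ ((k : ℤ) - 2)) * g (Real.cosh ρ - 1)
      + (2 * (k : ℝ) - j - 1) / (2 * n) * Real.sinh ρ ^ ((n : ℤ) - k)
          * Real.cosh ρ ^ ((k : ℤ) - 1) * deriv g (Real.cosh ρ - 1)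
    ≥ ((((n : ℝ) - k) * ((k : ℝ) - j)) / (2 * n) * Real.sinh ρ ^ ((n : ℤ) - k - 2)
          * Real.cosh ρ ^ (k : ℤ)
        + (((k : ℝ) + 1) * ((k : ℝ) - j - 1)) / (2 * n) * Real.sinh ρ ^ ((n : ℤ) - k)
          * Real.cosh ρ ^ ((k : ℤ) - 2)) * g (Real.cosh ρ - 1)
    ∧ 0 < ((((n : ℝ) - k) * ((k : ℝ) - j)) / (2 * n) * Real.sinh ρ ^ ((n : ℤ) - k - 2)
          * Real.cosh ρ ^ (k : ℤ)
        + (((k : ℝ) + 1) * ((k : ℝ) - j - 1)) / (2 * n) * Real.sinh ρ ^ ((n : ℤ) - k)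
          * Real.cosh ρ ^ ((k : ℤ) - 2)) * g (Real.cosh ρ - 1) :=
  stmt7_general g hpos hineq ρ hρ n k j hn hk hjk
end
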